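/- arXiv:0907.4486 — 5 statements merged into one kernel-verified Lean document; each statement's English description precedes it below -/
import Mathlib

section
/- The unilateral shift S on ℓ²(ℕ) is not a complex symmetric operator. -/
/-! If `T = C T* C` for a conjugation `C`, then `C` maps `ker T*` bijectively onto `ker T`.
The shift is an isometry, so `ker S = 0`, while `S* e₀ = 0`. -/

noncomputable section

open ContinuousLinearMap

def IsConjugation {H : Type*} [NormedAddCommGroup H] [InnerProductSpace ℂ H]
    (C : H → H) : Prop :=
  (∀ x y, C (x + y) = C x + C y) ∧
  (∀ (a : ℂ) (x : H), C (a • x) = (starRingEnd ℂ) a • C x) ∧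
  (∀ x, C (C x) = x) ∧
  (∀ x y : H, (inner ℂ (C x) (C y) : ℂ) = inner ℂ y x)

def IsComplexSymmetric {H : Type*} [NormedAddCommGroup H] [InnerProductSpace ℂ H]
    [CompleteSpace H] (T : H →L[ℂ] H) : Prop :=
  ∃ C : H → H, IsConjugation C ∧ ∀ x, T x = C (adjoint T (C x))

/-- `ℓ²(ℕ)`. -/
abbrev ellTwo : Type := lp (fun _ : ℕ => ℂ) 2

/-- The standard basis vector `eₙ` of `ℓ²(ℕ)`. -/
def e (n : ℕ) : ellTwo := lp.single 2 n (1 : ℂ)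

section ComplexSymmetric

variable {H : Type*} [NormedAddCommGroup H] [InnerProductSpace ℂ H]

theorem IsConjugation.map_zero {C : H → H} (hC : IsConjugation C) : C 0 = 0 := by
  have h := hC.1 0 0
  rwa [add_zero, left_eq_add] at h

theorem IsComplexSymmetric.injective_adjoint [CompleteSpace H] {T : H →L[ℂ] H}
    (hT : IsComplexSymmetric T) (hinj : Function.Injective T) :
    Function.Injective (adjoint T) := by
  obtain ⟨C, hC, hTC⟩ := hT
  refine (injective_iff_map_eq_zero (adjoint T)).2 fun y hy => ?_
  have hCy : T (C y) = 0 := by rw [hTC, hC.2.2.1, hy, hC.map_zero]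
  have hCy' : C y = 0 := hinj (hCy.trans (map_zero T).symm)
  rw [← hC.2.2.1 y, hCy', hC.map_zero]

end ComplexSymmetric

theorem e_ne_zero (n : ℕ) : e n ≠ 0 := by
  intro h
  simpa [e] using congr_arg (fun x : ellTwo => x n) h

theorem inner_e_left (n : ℕ) (x : ellTwo) : inner ℂ (e n) x = x n := by
  simp [e, lp.inner_single_left]

theorem inner_e_e (m n : ℕ) : inner ℂ (e m) (e n) = if m = n then 1 else 0 := by
  rw [inner_e_left, e, lp.single_apply]
  split_ifs <;> simp_all

theorem ellTwo.ext_e {F : Type*} [NormedAddCommGroup F] [NormedSpace ℂ F]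
    {A B : ellTwo →L[ℂ] F} (h : ∀ n, A (e n) = B (e n)) : A = B :=
  lp.ext_continuousLinearMap (by norm_num) fun n => ContinuousLinearMap.ext_ring (h n)

section Shift

variable {S : ellTwo →L[ℂ] ellTwo}

theorem adjoint_comp_self_eq_id_of_shift (hS : ∀ n, S (e n) = e (n + 1)) :
    adjoint S ∘L S = ContinuousLinearMap.id ℂ ellTwo := by
  refine ellTwo.ext_e fun n => lp.ext <| funext fun m => ?_
  rw [← inner_e_left, ← inner_e_left, comp_apply, adjoint_inner_right, hS, hS, id_apply,
    inner_e_e, inner_e_e]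
  simp

theorem injective_of_shift (hS : ∀ n, S (e n) = e (n + 1)) : Function.Injective S :=
  Function.LeftInverse.injective (g := adjoint S) fun x => by
    simpa using congr($(adjoint_comp_self_eq_id_of_shift hS) x)

theorem adjoint_apply_e_zero_of_shift (hS : ∀ n, S (e n) = e (n + 1)) : adjoint S (e 0) = 0 := by
  have hS0 : innerSL ℂ (e 0) ∘L S = 0 :=
    ellTwo.ext_e fun n => by simp [hS, inner_e_e]
  refine ext_inner_right ℂ fun x => ?_
  rw [adjoint_inner_left, inner_zero_left]
  simpa using congr($hS0 x)

end Shift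

theorem unilateral_shift_not_complexSymmetric
    (S : ellTwo →L[ℂ] ellTwo) (hS : ∀ n, S (e n) = e (n + 1)) :
    ¬ IsComplexSymmetric S := fun hsym =>
  e_ne_zero 0 <| hsym.injective_adjoint (injective_of_shift hS) <| by
    rw [adjoint_apply_e_zero_of_shift hS, map_zero]
end
end

section
/- Let H, K be separable complex Hilbert spaces and T ∈ B(H). Then T is a complex symmetric operator if and only if T ⊕ 0 ∈ B(H ⊕ K) is a complex symmetric operator. -/
noncomputable section

open ContinuousLinearMap

/-! A conjugation `C` with `S = C S* C` maps `ker S ∩ ker S*` into itself, hence also its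
orthogonal complement, which for `S = T ⊕ 0` is `(ker T ∩ ker T*)ᗮ ⊕ 0`. So `C` restricts to a
conjugation of `(ker T ∩ ker T*)ᗮ ⊆ H` intertwining `T` and `T*`; gluing it with any conjugation
of `ker T ∩ ker T*`, where `T` and `T*` vanish, gives a conjugation for `T`. Conversely, if
`T = C T* C` then `C ⊕ C'` works for `T ⊕ 0`, where `C'` is any conjugation of `K` (e.g.
coordinatewise complex conjugation in a Hilbert basis). -/

open scoped InnerProductSpace

namespace IsConjugation

variable {E F : Type*} [NormedAddCommGroup E] [InnerProductSpace ℂ E]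
  [NormedAddCommGroup F] [InnerProductSpace ℂ F] {C : E → E}

theorem map_zero_s4 (hC : IsConjugation C) : C 0 = 0 := by
  simpa using hC.2.1 0 0

theorem inner_map_left (hC : IsConjugation C) (x y : E) : ⟪C x, y⟫_ℂ = ⟪C y, x⟫_ℂ := by
  simpa only [hC.2.2.1] using hC.2.2.2 x (C y)

theorem prod (hC : IsConjugation C) {D : F → F} (hD : IsConjugation D) :
    IsConjugation fun x : WithLp 2 (E × F) => WithLp.toLp 2 (C x.fst, D x.snd) := by
  refine ⟨fun x y => ?_, fun a x => ?_, fun x => ?_, fun x y => ?_⟩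
  · simp only [WithLp.add_fst, WithLp.add_snd, hC.1, hD.1]; rfl
  · simp only [WithLp.smul_fst, WithLp.smul_snd, hC.2.1, hD.2.1]; rfl
  · simp only [WithLp.toLp_fst, WithLp.toLp_snd, hC.2.2.1, hD.2.2.1]; rfl
  · simp [hC.2.2.2, hD.2.2.2]

theorem conj_linearIsometryEquiv (hC : IsConjugation C) (e : E ≃ₗᵢ[ℂ] F) :
    IsConjugation (e ∘ C ∘ e.symm) := by
  refine ⟨fun x y => ?_, fun a x => ?_, fun x => ?_, fun x y => ?_⟩
  · simp [hC.1]
  · simp [hC.2.1]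
  · simp [hC.2.2.1]
  · simp [hC.2.2.2]

theorem restrict_of_intertwining {C : F → F} (hC : IsConjugation C) (J : E →ₗᵢ[ℂ] F)
    {M : Submodule ℂ E} {D : E → E} (hDM : Set.MapsTo D M M)
    (hJD : ∀ m ∈ M, J (D m) = C (J m)) : IsConjugation fun m : M => (⟨D m, hDM m.2⟩ : M) := by
  refine ⟨fun x y => Subtype.ext ?_, fun a x => Subtype.ext ?_, fun x => Subtype.ext ?_,
    fun x y => ?_⟩
  · show D (x + y : E) = D x + D y
    apply J.injective
    rw [map_add, hJD _ (add_mem x.2 y.2), map_add, hC.1, hJD _ x.2, hJD _ y.2]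
  · show D (a • x : E) = starRingEnd ℂ a • D x
    apply J.injective
    rw [map_smul, hJD _ (M.smul_mem a x.2), map_smul, hC.2.1, hJD _ x.2]
  · apply J.injective
    rw [hJD _ (hDM x.2), hJD _ x.2, hC.2.2.1]
  · rw [Submodule.coe_inner, Submodule.coe_inner, ← J.inner_map_map, hJD x x.2, hJD y y.2,
      hC.2.2.2, J.inner_map_map]

theorem mapsTo_orthogonal (hC : IsConjugation C) {Z : Submodule ℂ E}
    (hZ : Set.MapsTo C Z Z) : Set.MapsTo C Zᗮ Zᗮ := fun v hv =>
  (Z.mem_orthogonal _).2 fun u hu => by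
    rw [inner_eq_zero_symm, hC.inner_map_left]
    exact Z.inner_right_of_mem_orthogonal (hZ hu) hv

variable [CompleteSpace E] {T : E →L[ℂ] E}

theorem map_apply_eq_adjoint_apply (hC : IsConjugation C) (hT : ∀ x, T x = C (adjoint T (C x)))
    (x : E) : C (T x) = adjoint T (C x) := by
  rw [hT, hC.2.2.1]

theorem mapsTo_ker_inf_ker_adjoint (hC : IsConjugation C)
    (hT : ∀ x, T x = C (adjoint T (C x))) :
    Set.MapsTo C (T.ker ⊓ (adjoint T).ker) (T.ker ⊓ (adjoint T).ker) := by
  rintro z ⟨hz, hz'⟩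
  simp only [SetLike.mem_coe, LinearMap.mem_ker, coe_coe] at hz hz'
  exact ⟨show T (C z) = 0 by rw [hT, hC.2.2.1, hz', hC.map_zero_s4],
    show adjoint T (C z) = 0 by rw [← hC.map_apply_eq_adjoint_apply hT, hz, hC.map_zero_s4]⟩

end IsConjugation

theorem exists_isConjugation (E : Type*) [NormedAddCommGroup E] [InnerProductSpace ℂ E]
    [CompleteSpace E] : ∃ C : E → E, IsConjugation C := by
  obtain ⟨w, b, -⟩ := exists_hilbertBasis ℂ E
  refine ⟨fun x => b.repr.symm (star (b.repr x)), fun x y => ?_, fun a x => ?_, fun x => ?_,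
    fun x y => ?_⟩
  · simp [star_add]
  · simp [star_smul]
  · simp
  · have inner_star : ∀ f g : lp (fun _ : w => ℂ) 2, ⟪star f, star g⟫_ℂ = ⟪g, f⟫_ℂ := by
      intro f g
      simp only [lp.inner_eq_tsum, lp.star_apply, RCLike.inner_apply]
      congr 1 with i
      simp [mul_comm]
    rw [b.repr.symm.inner_map_map, inner_star, b.repr.inner_map_map]

section

variable {E : Type*} [NormedAddCommGroup E] [InnerProductSpace ℂ E] [CompleteSpace E]
  {T : E →L[ℂ] E}

theorem adjoint_apply_mem_of_orthogonal_le_ker (M : Submodule ℂ E) [M.HasOrthogonalProjection]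
    (hM : Mᗮ ≤ T.ker) (x : E) : adjoint T x ∈ M := by
  rw [← M.orthogonal_orthogonal]
  intro u hu
  rw [adjoint_inner_right, show T u = 0 from hM hu, inner_zero_left]

theorem isComplexSymmetric_of_isConjugation_on (M : Submodule ℂ E)
    [M.HasOrthogonalProjection] (hM : Mᗮ ≤ T.ker ⊓ (adjoint T).ker) {D : E → E}
    (hDM : Set.MapsTo D M M) (hD : IsConjugation fun m : M => (⟨D m, hDM m.2⟩ : M))
    (hT : ∀ m ∈ M, T m = D (adjoint T (D m))) : IsComplexSymmetric T := by
  obtain ⟨C₂, hC₂⟩ := exists_isConjugation Mᗮ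
  set e := M.orthogonalDecomposition
  refine ⟨_, (hD.prod hC₂).conj_linearIsometryEquiv e.symm, fun x => ?_⟩
  simp only [Function.comp_apply, LinearIsometryEquiv.symm_symm, e,
    Submodule.orthogonalDecomposition_apply, Submodule.orthogonalDecomposition_symm_apply,
    WithLp.toLp_fst, WithLp.toLp_snd]
  set P := M.orthogonalProjectionOnto
  set P' := Mᗮ.orthogonalProjectionOnto
  have hmem : adjoint T (D (P x)) ∈ M :=
    adjoint_apply_mem_of_orthogonal_le_ker M (hM.trans inf_le_left) _
  have hker : ∀ v ∈ Mᗮ, T v = 0 ∧ adjoint T v = 0 := fun v hv => hM hv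
  have hx : (P x : E) + P' x = x := M.starProjection_add_starProjection_orthogonal x
  have hTx : T x = T (P x) :=
    calc T x = T (P x + P' x) := by rw [hx]
      _ = T (P x) := by rw [map_add, (hker _ (P' x).2).1, add_zero]
  rw [map_add, (hker _ (C₂ (P' x)).2).2, add_zero,
    M.orthogonalProjectionOnto_mem_subspace_eq_self ⟨_, hmem⟩,
    Submodule.orthogonalProjectionOnto_orthogonal_apply_eq_zero hmem, hC₂.map_zero_s4,
    ZeroMemClass.coe_zero, add_zero, hTx, hT _ (P x).2]

end

section DirectSumZero

variable {H K : Type*} [NormedAddCommGroup H] [InnerProductSpace ℂ H]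
  [NormedAddCommGroup K] [InnerProductSpace ℂ K]

variable (H K) in
def WithLp.inlₗᵢ : H →ₗᵢ[ℂ] WithLp 2 (H × K) where
  toLinearMap := (WithLp.linearEquiv 2 ℂ (H × K)).symm.toLinearMap ∘ₗ LinearMap.inl ℂ H K
  norm_map' := WithLp.norm_toLp_fst 2 H K

@[simp]
theorem WithLp.inlₗᵢ_apply (x : H) : WithLp.inlₗᵢ H K x = WithLp.toLp 2 (x, 0) := rfl

variable [CompleteSpace H] [CompleteSpace K] {T : H →L[ℂ] H}
  {S : WithLp 2 (H × K) →L[ℂ] WithLp 2 (H × K)}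

theorem adjoint_apply_of_prod_zero (hS : ∀ x, S x = WithLp.inlₗᵢ H K (T x.fst))
    (y : WithLp 2 (H × K)) : adjoint S y = WithLp.inlₗᵢ H K (adjoint T y.fst) :=
  ext_inner_left ℂ fun v => by simp [adjoint_inner_right, hS]

theorem mem_ker_inf_ker_adjoint_iff_of_prod_zero
    (hS : ∀ x, S x = WithLp.inlₗᵢ H K (T x.fst)) (u : WithLp 2 (H × K)) :
    u ∈ S.ker ⊓ (adjoint S).ker ↔ u.fst ∈ T.ker ⊓ (adjoint T).ker := by
  simp [hS, adjoint_apply_of_prod_zero hS]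

theorem mem_orthogonal_ker_inf_ker_adjoint_iff_of_prod_zero
    (hS : ∀ x, S x = WithLp.inlₗᵢ H K (T x.fst)) (w : WithLp 2 (H × K)) :
    w ∈ (S.ker ⊓ (adjoint S).ker)ᗮ ↔ w.fst ∈ (T.ker ⊓ (adjoint T).ker)ᗮ ∧ w.snd = 0 := by
  simp only [Submodule.mem_orthogonal, mem_ker_inf_ker_adjoint_iff_of_prod_zero hS]
  refine ⟨fun hw => ⟨fun z hz => ?_, ?_⟩, fun ⟨hw, hw'⟩ u hu => ?_⟩
  · simpa using hw (WithLp.toLp 2 (z, 0)) hz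
  · simpa using hw (WithLp.toLp 2 (0, w.snd)) (zero_mem _)
  · simp [hw _ hu, hw']

theorem IsComplexSymmetric.prod_zero (hT : IsComplexSymmetric T)
    (hS : ∀ x, S x = WithLp.inlₗᵢ H K (T x.fst)) : IsComplexSymmetric S := by
  obtain ⟨C, hC, hCT⟩ := hT
  obtain ⟨C₂, hC₂⟩ := exists_isConjugation K
  refine ⟨_, hC.prod hC₂, fun x => ?_⟩
  simp [hS, adjoint_apply_of_prod_zero hS, ← hCT, hC₂.map_zero_s4]

theorem IsComplexSymmetric.of_prod_zero (hS : ∀ x, S x = WithLp.inlₗᵢ H K (T x.fst))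
    (h : IsComplexSymmetric S) : IsComplexSymmetric T := by
  obtain ⟨C, hC, hCS⟩ := h
  set J := WithLp.inlₗᵢ H K
  set Z := T.ker ⊓ (adjoint T).ker
  have : CompleteSpace Z := (T.isClosed_ker.inter (adjoint T).isClosed_ker).completeSpace_coe
  have hCJ : ∀ m ∈ Zᗮ, C (J m) ∈ (S.ker ⊓ (adjoint S).ker)ᗮ := fun m hm =>
    hC.mapsTo_orthogonal (hC.mapsTo_ker_inf_ker_adjoint hCS)
      ((mem_orthogonal_ker_inf_ker_adjoint_iff_of_prod_zero hS _).2 ⟨hm, rfl⟩)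
  have hDM : Set.MapsTo (fun h => (C (J h)).fst) Zᗮ Zᗮ := fun m hm =>
    ((mem_orthogonal_ker_inf_ker_adjoint_iff_of_prod_zero hS _).1 (hCJ m hm)).1
  have hJD : ∀ m ∈ Zᗮ, J (C (J m)).fst = C (J m) := fun m hm =>
    congrArg (WithLp.toLp 2) (Prod.ext rfl
      ((mem_orthogonal_ker_inf_ker_adjoint_iff_of_prod_zero hS _).1 (hCJ m hm)).2.symm)
  refine isComplexSymmetric_of_isConjugation_on Zᗮ Z.orthogonal_orthogonal.le hDM
    (hC.restrict_of_intertwining J hDM hJD) fun m hm => J.injective ?_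
  have hmem : adjoint T (C (J m)).fst ∈ Zᗮ :=
    adjoint_apply_mem_of_orthogonal_le_ker _ (Z.orthogonal_orthogonal.trans_le inf_le_left) _
  calc J (T m) = S (J m) := (hS (J m)).symm
    _ = C (adjoint S (J (C (J m)).fst)) := by rw [hCS, hJD m hm]
    _ = J (C (J (adjoint T (C (J m)).fst))).fst := by
      rw [adjoint_apply_of_prod_zero hS, hJD _ hmem]; rfl

end DirectSumZero

theorem complexSymmetric_iff_directSum_zero_complexSymmetric_general
    {H K : Type*} [NormedAddCommGroup H] [InnerProductSpace ℂ H] [CompleteSpace H]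
    [NormedAddCommGroup K] [InnerProductSpace ℂ K] [CompleteSpace K]
    (T : H →L[ℂ] H)
    (S : WithLp 2 (H × K) →L[ℂ] WithLp 2 (H × K))
    (hS : ∀ x, S x = (WithLp.equiv 2 (H × K)).symm
      (T ((WithLp.equiv 2 (H × K)) x).1, 0)) :
    IsComplexSymmetric T ↔ IsComplexSymmetric S :=
  ⟨fun hT => hT.prod_zero hS, IsComplexSymmetric.of_prod_zero hS⟩

theorem complexSymmetric_iff_directSum_zero_complexSymmetric
    {H K : Type*} [NormedAddCommGroup H] [InnerProductSpace ℂ H] [CompleteSpace H]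
    [TopologicalSpace.SeparableSpace H]
    [NormedAddCommGroup K] [InnerProductSpace ℂ K] [CompleteSpace K]
    [TopologicalSpace.SeparableSpace K]
    (T : H →L[ℂ] H)
    (S : WithLp 2 (H × K) →L[ℂ] WithLp 2 (H × K))
    (hS : ∀ x, S x = (WithLp.equiv 2 (H × K)).symm
      (T ((WithLp.equiv 2 (H × K)) x).1, 0)) :
    IsComplexSymmetric T ↔ IsComplexSymmetric S :=
  complexSymmetric_iff_directSum_zero_complexSymmetric_general T S hS
end
end

section
/- Every operator on a two-dimensional complex Hilbert space is a complex symmetric operator. -/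
noncomputable section

open ContinuousLinearMap

/-!
In the coordinates of an orthonormal basis, `v ↦ U v̄` is a conjugation for every symmetric
unitary matrix `U`, and it intertwines `T*` with the operator `T` of matrix `M` exactly when
`M U` is symmetric. For `2 × 2` matrices take `U = [[w, t], [t, -w̄]]` with `t` real and
`‖w‖² + t² = 1`: it is a symmetric unitary, and the symmetry of `M U` is a single `ℝ`-linear
equation `ℂ × ℝ → ℂ` in `(w, t)`, which has a nonzero solution since `3 > 2`; rescale it.
-/

open scoped ComplexConjugate
open Matrix WithLp

section Transport

variable {H K : Type*} [NormedAddCommGroup H] [InnerProductSpace ℂ H]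
  [NormedAddCommGroup K] [InnerProductSpace ℂ K]

theorem IsConjugation.conj_linearIsometryEquiv_s7 (L : H ≃ₗᵢ[ℂ] K) {C : K → K}
    (hC : IsConjugation C) : IsConjugation (L.symm ∘ C ∘ L) := by
  obtain ⟨hadd, hsmul, hinv, hinner⟩ := hC
  refine ⟨fun x y => ?_, fun a x => ?_, fun x => ?_, fun x y => ?_⟩
  · simp [hadd]
  · simp [hsmul]
  · simp [hinv]
  · simp [hinner]

theorem IsComplexSymmetric.of_conjStarAlgEquiv [CompleteSpace H] [CompleteSpace K]
    (L : H ≃ₗᵢ[ℂ] K) {T : H →L[ℂ] H} (hT : IsComplexSymmetric (L.conjStarAlgEquiv T)) :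
    IsComplexSymmetric T := by
  obtain ⟨C, hC, hTC⟩ := hT
  refine ⟨L.symm ∘ C ∘ L, hC.conj_linearIsometryEquiv_s7 L, fun x => ?_⟩
  have hadj : adjoint (L.conjStarAlgEquiv T) = L.conjStarAlgEquiv (adjoint T) :=
    (map_star L.conjStarAlgEquiv T).symm
  simpa [hadj] using congrArg L.symm (hTC (L x))

end Transport

theorem star_mulVec_star {ι R : Type*} [Fintype ι] [CommSemiring R] [StarRing R]
    (A : Matrix ι ι R) (v : ι → R) : star (A *ᵥ star v) = Aᴴᵀ *ᵥ v := by
  rw [star_mulVec, star_star, mulVec_transpose]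

section Euclidean

variable {ι : Type*} [Fintype ι] [DecidableEq ι]

def matrixConj (U : Matrix ι ι ℂ) (v : EuclideanSpace ℂ ι) : EuclideanSpace ℂ ι :=
  toLp 2 (U *ᵥ star (ofLp v))

theorem isConjugation_matrixConj {U : Matrix ι ι ℂ} (hU : U ∈ unitaryGroup ι ℂ)
    (hUs : U.IsSymm) : IsConjugation (matrixConj U) := by
  have hUU : U * Uᴴ = 1 := mem_unitaryGroup_iff.mp hU
  have hUU' : Uᴴ * U = 1 := mem_unitaryGroup_iff'.mp hU
  have hUc : Uᴴᵀ = Uᴴ := hUs.conjTranspose.eq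
  refine ⟨fun x y => ?_, fun a x => ?_, fun x => ?_, fun x y => ?_⟩
  · simp [matrixConj, mulVec_add]
  · simp [matrixConj, mulVec_smul]
  · simp only [matrixConj, ofLp_toLp, star_mulVec_star, hUc, mulVec_mulVec, hUU, one_mulVec]
  · simp only [matrixConj, EuclideanSpace.inner_eq_star_dotProduct, star_mulVec_star, hUc]
    rw [dotProduct_mulVec, ← mulVec_transpose, hUc, mulVec_mulVec, hUU', one_mulVec,
      dotProduct_comm]

theorem isComplexSymmetric_toEuclideanCLM {M U : Matrix ι ι ℂ} (hU : U ∈ unitaryGroup ι ℂ)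
    (hUs : U.IsSymm) (hMU : (M * U).IsSymm) :
    IsComplexSymmetric (toEuclideanCLM (𝕜 := ℂ) M) := by
  refine ⟨matrixConj U, isConjugation_matrixConj hU hUs, fun x => ?_⟩
  have hMU' : U * Mᵀ = M * U := by rw [← hMU.eq, transpose_mul, hUs.eq]
  have hUU : U * Uᴴ = 1 := mem_unitaryGroup_iff.mp hU
  rw [← star_eq_adjoint, ← map_star, star_eq_conjTranspose]
  ext1
  simp only [matrixConj, ofLp_toLp, ofLp_toEuclideanCLM, mulVec_mulVec, star_mulVec_star,
    conjTranspose_mul, conjTranspose_conjTranspose, transpose_mul, hUs.conjTranspose.eq]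
  rw [← Matrix.mul_assoc, hMU', Matrix.mul_assoc, hUU, Matrix.mul_one]

end Euclidean

theorem exists_mul_add_mul_conj_eq_mul_ofReal (a b c : ℂ) :
    ∃ (w : ℂ) (t : ℝ), ‖w‖ ^ 2 + t ^ 2 = 1 ∧ a * w + b * conj w = c * t := by
  let f : ℂ × ℝ →ₗ[ℝ] ℂ :=
    { toFun := fun p => a * p.1 + b * conj p.1 - c * p.2
      map_add' := fun p q => by simp only [Prod.fst_add, Prod.snd_add, map_add]; push_cast; ring
      map_smul' := fun r p => by simp [Complex.real_smul]; ring }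
  have hker : LinearMap.ker f ≠ ⊥ := LinearMap.ker_ne_bot_of_finrank_lt (by
    simp [Module.finrank_prod, Complex.finrank_real_complex])
  obtain ⟨⟨w, t⟩, hf, hne⟩ := (Submodule.ne_bot_iff _).mp hker
  have hf : a * w + b * conj w = c * t := sub_eq_zero.mp hf
  set N := ‖w‖ ^ 2 + t ^ 2
  have hN : 0 < N := by
    rcases eq_or_ne w 0 with rfl | hw
    · have ht : t ≠ 0 := fun ht => hne (by simp [ht])
      simp only [N, norm_zero]
      positivity
    · have := norm_pos_iff.mpr hw
      positivity
  refine ⟨(√N)⁻¹ * w, (√N)⁻¹ * t, ?_, ?_⟩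
  · rw [norm_mul, Complex.norm_real, Real.norm_eq_abs, mul_pow, mul_pow, sq_abs, ← mul_add,
      inv_pow, Real.sq_sqrt hN.le, inv_mul_cancel₀ hN.ne']
  · simp only [map_mul, map_inv₀, Complex.conj_ofReal, Complex.ofReal_mul, Complex.ofReal_inv]
    linear_combination ((√N : ℂ)⁻¹) * hf

theorem mem_unitaryGroup_of_norm_sq_add_sq {w : ℂ} {t : ℝ} (h : ‖w‖ ^ 2 + t ^ 2 = 1) :
    !![w, (t : ℂ); (t : ℂ), -conj w] ∈ unitaryGroup (Fin 2) ℂ := by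
  have h' : w * conj w + (t : ℂ) ^ 2 = 1 := by
    rw [Complex.mul_conj']; exact_mod_cast h
  rw [mem_unitaryGroup_iff]
  ext i j
  fin_cases i <;> fin_cases j <;> simp [Matrix.mul_apply, Fin.sum_univ_two]
  · linear_combination h'
  · ring
  · ring
  · linear_combination h'

theorem exists_unitary_isSymm_mul_isSymm (M : Matrix (Fin 2) (Fin 2) ℂ) :
    ∃ U ∈ unitaryGroup (Fin 2) ℂ, U.IsSymm ∧ (M * U).IsSymm := by
  obtain ⟨w, t, hnorm, heq⟩ :=
    exists_mul_add_mul_conj_eq_mul_ofReal (M 1 0) (M 0 1) (M 0 0 - M 1 1)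
  refine ⟨_, mem_unitaryGroup_of_norm_sq_add_sq hnorm, ?_, ?_⟩
  · exact IsSymm.ext fun i j => by fin_cases i <;> fin_cases j <;> rfl
  · refine IsSymm.ext fun i j => ?_
    fin_cases i <;> fin_cases j <;> simp [Matrix.mul_apply, Fin.sum_univ_two]
    · linear_combination heq
    · linear_combination -heq

theorem complexSymmetric_of_dim_two
    {H : Type*} [NormedAddCommGroup H] [InnerProductSpace ℂ H] [CompleteSpace H]
    (hdim : Module.finrank ℂ H = 2) (T : H →L[ℂ] H) :
    IsComplexSymmetric T := by
  have : FiniteDimensional ℂ H := .of_finrank_pos (by omega)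
  let L := ((stdOrthonormalBasis ℂ H).reindex (finCongr hdim)).repr
  obtain ⟨M, hM⟩ :=
    (toEuclideanCLM (n := Fin 2) (𝕜 := ℂ)).surjective (L.conjStarAlgEquiv T)
  obtain ⟨U, hU, hUs, hMU⟩ := exists_unitary_isSymm_mul_isSymm M
  exact .of_conjStarAlgEquiv L (hM ▸ isComplexSymmetric_toEuclideanCLM hU hUs hMU)
end
end

section
/- The operator S ⊕ S* on ℓ²(ℕ) ⊕ ℓ²(ℕ), where S is the unilateral shift, is a complex symmetric operator. -/
noncomputable section

open ContinuousLinearMap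

/-!
Let `J` be coordinatewise complex conjugation on `ℓ²(ℕ)`. The shift has a real matrix, so
`S J = J S`. For any conjugation `J` commuting with an operator `T`, the map `C (x, y) = (J y, J x)`
is a conjugation of `H ⊕ H` with `C (T ⊕ T*)* C = C (T* ⊕ T) C = T ⊕ T*`, the last step because
`J T = T J` forces `J T* = T* J`.
-/

section Conjugation

variable {H : Type*} [NormedAddCommGroup H] [InnerProductSpace ℂ H] {J : H → H}

theorem IsConjugation.inner_apply_comm (hJ : IsConjugation J) (x y : H) :
    inner ℂ x (J y) = inner ℂ y (J x) := by
  rw [← hJ.2.2.2 (J y) x, hJ.2.2.1]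

def swapConj (J : H → H) (z : WithLp 2 (H × H)) : WithLp 2 (H × H) :=
  WithLp.toLp 2 (J z.snd, J z.fst)

theorem isConjugation_swapConj (hJ : IsConjugation J) : IsConjugation (swapConj J) := by
  obtain ⟨hadd, hsmul, hinv, hinner⟩ := hJ
  refine ⟨fun x y => ?_, fun a x => ?_, fun x => ?_, fun x y => ?_⟩
  · simp [WithLp.ext_iff, swapConj, hadd]
  · simp [WithLp.ext_iff, swapConj, hsmul]
  · simp only [swapConj, WithLp.toLp_fst, WithLp.toLp_snd, hinv]
    rfl
  · simp only [swapConj, WithLp.prod_inner_apply, hinner]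
    exact add_comm _ _

variable [CompleteSpace H] {T : H →L[ℂ] H}

theorem IsConjugation.inner_apply_eq_inner_adjoint (hJ : IsConjugation J)
    (hT : ∀ x, T (J x) = J (T x)) (a b : H) :
    inner ℂ (T a) (J b) = inner ℂ a (J (adjoint T b)) := by
  rw [hJ.inner_apply_comm, ← hT, ← adjoint_inner_left, hJ.inner_apply_comm]

theorem IsConjugation.isComplexSymmetric_prod_adjoint (hJ : IsConjugation J)
    (hT : ∀ x, T (J x) = J (T x))
    (D : WithLp 2 (H × H) →L[ℂ] WithLp 2 (H × H))
    (hD : ∀ z, D z = WithLp.toLp 2 (T z.fst, adjoint T z.snd)) :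
    IsComplexSymmetric D := by
  refine ⟨swapConj J, isConjugation_swapConj hJ, fun z => ?_⟩
  have hDC : adjoint D (swapConj J z) = swapConj J (D z) := by
    refine ext_inner_left ℂ fun y => ?_
    simp only [adjoint_inner_right, hD, swapConj, WithLp.prod_inner_apply, WithLp.ofLp_fst,
      WithLp.ofLp_snd, WithLp.toLp_fst, WithLp.toLp_snd]
    rw [hJ.inner_apply_eq_inner_adjoint hT, adjoint_inner_left, hT]
  rw [hDC, (isConjugation_swapConj hJ).2.2.1]

end Conjugation

section SequenceSpace

variable {ι κ : Type*}

theorem isConjugation_star_lp : IsConjugation (star : lp (fun _ : ι => ℂ) 2 → _) := by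
  refine ⟨star_add, fun a x => ?_, star_star, fun x y => ?_⟩
  · rw [star_smul, starRingEnd_apply]
  · rw [lp.inner_eq_tsum, lp.inner_eq_tsum]
    congr 1
    funext i
    simp only [lp.star_apply, RCLike.inner_apply, starRingEnd_apply, star_star]
    ring

variable [DecidableEq ι]

theorem lp_star_single (i : ι) (c : ℂ) :
    star (lp.single 2 i c : lp (fun _ : ι => ℂ) 2) = lp.single 2 i (star c) := by
  ext j
  rcases eq_or_ne j i with rfl | h
  · simp
  · simp [Pi.single_eq_of_ne h]

theorem apply_star_of_star_apply_single (T : lp (fun _ : ι => ℂ) 2 →L[ℂ] lp (fun _ : κ => ℂ) 2)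
    (hT : ∀ i, star (T (lp.single 2 i 1)) = T (lp.single 2 i 1)) (x : lp (fun _ : ι => ℂ) 2) :
    T (star x) = star (T x) := by
  have h2 : (2 : ENNReal) ≠ ⊤ := by norm_num
  have hsingle (i : ι) (c : ℂ) : T (lp.single 2 i c) = c • T (lp.single 2 i 1) := by
    rw [← map_smul, ← lp.single_smul, smul_eq_mul, mul_one]
  have hstar : HasSum (fun i => star (x i) • T (lp.single 2 i 1)) (T (star x)) := by
    convert (lp.hasSum_single h2 (star x)).mapL T using 1
    funext i
    rw [hsingle i (star x i), lp.star_apply]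
  have hconj : HasSum (fun i => star (x i) • T (lp.single 2 i 1)) (star (T x)) := by
    convert ((lp.hasSum_single h2 x).mapL T).star using 1
    funext i
    rw [hsingle i (x i), star_smul, hT]
  exact hstar.unique hconj

end SequenceSpace

theorem shift_oplus_adjoint_shift_complexSymmetric
    (S : ellTwo →L[ℂ] ellTwo) (hS : ∀ n, S (e n) = e (n + 1))
    (D : WithLp 2 (ellTwo × ellTwo) →L[ℂ] WithLp 2 (ellTwo × ellTwo))
    (hD : ∀ x, D x = (WithLp.equiv 2 (ellTwo × ellTwo)).symm
      (S ((WithLp.equiv 2 (ellTwo × ellTwo)) x).1,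
       adjoint S ((WithLp.equiv 2 (ellTwo × ellTwo)) x).2)) :
    IsComplexSymmetric D := by
  have hSreal : ∀ x, S (star x) = star (S x) :=
    apply_star_of_star_apply_single S fun n => by rw [← e, hS, e, lp_star_single, star_one]
  refine isConjugation_star_lp.isComplexSymmetric_prod_adjoint hSreal D fun z => ?_
  simpa only [WithLp.equiv_apply, WithLp.equiv_symm_apply, WithLp.ofLp_fst, WithLp.ofLp_snd]
    using hD z
end
end

section
/- If T is a complex symmetric partial isometry with block form [[A, 0], [B, 0]] relative to H = (ker T)^⊥ ⊕ ker T, then the Aluthge transform of T equals A ⊕ 0, i.e., the block operator [[A, 0], [0, 0]]. -/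
noncomputable section

open ContinuousLinearMap

def IsPartialIsometry {H : Type*} [NormedAddCommGroup H] [InnerProductSpace ℂ H]
    [CompleteSpace H] (T : H →L[ℂ] H) : Prop :=
  (adjoint T ∘L T) ∘L (adjoint T ∘L T) = adjoint T ∘L T


/-! For a partial isometry `T`, `P = T*T` is the orthogonal projection onto `(ker T)ᗮ`; being a
positive idempotent it is its own positive square root, so `|T| = |T|^{1/2} = P`. Hence
`U P = T` and `T P = T`, and the Aluthge transform `P U P = P T = P T P` is the compression of `T`
to `(ker T)ᗮ`, extended by `0` on `ker T`. -/

theorem IsStarProjection.eq_starProjection_orthogonal_ker {𝕜 E : Type*} [RCLike 𝕜]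
    [NormedAddCommGroup E] [InnerProductSpace 𝕜 E] [CompleteSpace E] {p : E →L[𝕜] E}
    (hp : IsStarProjection p) : p = p.kerᗮ.starProjection := by
  obtain ⟨_, hrange⟩ := isStarProjection_iff_eq_starProjection_range.mp hp
  conv_rhs => rw [hrange]
  simp only [Submodule.ker_starProjection, Submodule.orthogonal_orthogonal]
  exact hrange

section

variable {H : Type*} [NormedAddCommGroup H] [InnerProductSpace ℂ H] [CompleteSpace H]

theorem ContinuousLinearMap.IsPositive.eq_of_comp_self_eq {S P : H →L[ℂ] H}
    (hS : S.IsPositive) (hP : P.IsPositive) (h : S ∘L S = P ∘L P) : S = P :=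
  (CFC.mul_self_eq_mul_self_iff S P ((nonneg_iff_isPositive S).mpr hS)
    ((nonneg_iff_isPositive P).mpr hP)).mp h

namespace IsPartialIsometry

variable {T : H →L[ℂ] H}

theorem isStarProjection (hT : IsPartialIsometry T) : IsStarProjection (adjoint T ∘L T) :=
  ⟨hT, (isPositive_adjoint_comp_self T).isSelfAdjoint⟩

theorem adjoint_comp_self_eq_starProjection (hT : IsPartialIsometry T) :
    adjoint T ∘L T = T.kerᗮ.starProjection := by
  rw [hT.isStarProjection.eq_starProjection_orthogonal_ker]
  simp only [ker_adjoint_comp_self]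

theorem comp_adjoint_comp_self (hT : IsPartialIsometry T) : T ∘L (adjoint T ∘L T) = T := by
  ext x
  have hx : x - (adjoint T ∘L T) x ∈ (adjoint T ∘L T).ker := by
    rw [LinearMap.mem_ker, coe_coe, map_sub, ← comp_apply, hT, sub_self]
  rw [ker_adjoint_comp_self, LinearMap.mem_ker, coe_coe, map_sub, sub_eq_zero] at hx
  exact hx.symm

end IsPartialIsometry

end

theorem aluthge_of_partialIsometry_general
    {H : Type*} [NormedAddCommGroup H] [InnerProductSpace ℂ H] [CompleteSpace H]
    (T : H →L[ℂ] H) (hT : IsPartialIsometry T)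
    (R : H →L[ℂ] H) (hR : R.IsPositive) (hR2 : R ∘L R = adjoint T ∘L T)
    (Rh : H →L[ℂ] H) (hRh : Rh.IsPositive) (hRh2 : Rh ∘L Rh = R)
    (U : H →L[ℂ] H) (hUR : T = U ∘L R)
    (A : (LinearMap.ker (T : H →ₗ[ℂ] H))ᗮ →L[ℂ] (LinearMap.ker (T : H →ₗ[ℂ] H))ᗮ)
    (hA : A = Submodule.orthogonalProjectionOnto (LinearMap.ker (T : H →ₗ[ℂ] H))ᗮ ∘L T ∘L (LinearMap.ker (T : H →ₗ[ℂ] H))ᗮ.subtypeL) :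
    Rh ∘L U ∘L Rh =
      (LinearMap.ker (T : H →ₗ[ℂ] H))ᗮ.subtypeL ∘L A ∘L Submodule.orthogonalProjectionOnto (LinearMap.ker (T : H →ₗ[ℂ] H))ᗮ := by
  set P := adjoint T ∘L T
  have hP : P.IsPositive := .of_isStarProjection hT.isStarProjection
  have hRP : R = P := hR.eq_of_comp_self_eq hP (hR2.trans hT.symm)
  have hRhP : Rh = P := hRh.eq_of_comp_self_eq hP ((hRh2.trans hRP).trans hT.symm)
  have hUP : U ∘L P = T := by rw [hUR, hRP]
  have hPK : P = (LinearMap.ker (T : H →ₗ[ℂ] H))ᗮ.starProjection :=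
    hT.adjoint_comp_self_eq_starProjection
  calc Rh ∘L U ∘L Rh = P ∘L T := by rw [hRhP, hUP]
    _ = P ∘L T ∘L P := by rw [hT.comp_adjoint_comp_self]
    _ = _ := by rw [hA, hPK]; rfl

/-- For a complex symmetric partial isometry `T` with polar decomposition
`T = U|T|` (where `|T| = R` is the positive operator with `R² = T*T`, `Rh` is
its positive square root, and `U` is the unique partial isometry with
`ker U = ker T` and `T = UR`), the Aluthge transform `Rh U Rh` equals the
block operator `A ⊕ 0 = [[A, 0], [0, 0]]` relative to `H = (ker T)ᗮ ⊕ ker T`,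
where `A` is the compression of `T` to `(ker T)ᗮ`. -/
theorem aluthge_of_partialIsometry
    {H : Type*} [NormedAddCommGroup H] [InnerProductSpace ℂ H] [CompleteSpace H]
    (T : H →L[ℂ] H) (hT : IsPartialIsometry T) (hTcs : IsComplexSymmetric T)
    (R : H →L[ℂ] H) (hR : R.IsPositive) (hR2 : R ∘L R = adjoint T ∘L T)
    (Rh : H →L[ℂ] H) (hRh : Rh.IsPositive) (hRh2 : Rh ∘L Rh = R)
    (U : H →L[ℂ] H) (hU : IsPartialIsometry U) (hUR : T = U ∘L R)
    (hker : LinearMap.ker (U : H →ₗ[ℂ] H) = LinearMap.ker (T : H →ₗ[ℂ] H))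
    (A : (LinearMap.ker (T : H →ₗ[ℂ] H))ᗮ →L[ℂ] (LinearMap.ker (T : H →ₗ[ℂ] H))ᗮ)
    (hA : A = Submodule.orthogonalProjectionOnto (LinearMap.ker (T : H →ₗ[ℂ] H))ᗮ ∘L T ∘L (LinearMap.ker (T : H →ₗ[ℂ] H))ᗮ.subtypeL) :
    Rh ∘L U ∘L Rh =
      (LinearMap.ker (T : H →ₗ[ℂ] H))ᗮ.subtypeL ∘L A ∘L Submodule.orthogonalProjectionOnto (LinearMap.ker (T : H →ₗ[ℂ] H))ᗮ :=
  aluthge_of_partialIsometry_general T hT R hR hR2 Rh hRh hRh2 U hUR A hA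
end
end
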